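/- For each x, t ∈ ℤ with x + t even and t > 1: b₁(x,t) = (1/2)·(b₁(x+1,t−1) + b₂(x+1,t−1)) and b₂(x,t) = (1/2)·(3·b₁(x−1,t−1) − b₂(x−1,t−1)). -/

import Mathlib

open scoped BigOperators

/-!
In any field `u`, splitting the path sum by the last move gives the Dirac equation
  `a₁(x,t+1) = u(x+½,t+½) (a₁(x+1,t) + a₂(x+1,t)) / √2`,
  `a₂(x,t+1) = u(x-½,t+½) (a₂(x-1,t) - a₁(x-1,t)) / √2`,
since paths ending with a move `(1,1)` contribute only to `a₂` and the others only to `a₁`.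
For the homogeneous field, two steps of this equation from an odd time `T` to an odd `x` only
meet edges whose field value does not depend on `x` (all `1`, except `-1` on the edge leaving
`(x-1,T+1)`), so `a(·,T+2)` is a translation-invariant expression in `a(·,T)`. On the sublattice
`x + T ≡ 0 (mod 4)` this expression preserves the invariant `a₂(x,T) = a₁(x,T) = a₁(x-2,T)`,
which holds at `T = 1`; inserting it into the two-step formula gives both recurrences.
-/

/-- The final x-coordinate of a checker path from `(0,0)` encoded by its sequence of moves
(`true` = move `(1,1)`, `false` = move `(-1,1)`). -/
def moveEndpoint {n : ℕ} (d : Fin n → Bool) : ℤ :=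
  ∑ k, (if d k then (1 : ℤ) else -1)

/-- The number of turns of a checker path encoded by its sequence of moves. -/
def nturns {n : ℕ} (d : Fin n → Bool) : ℕ :=
  ((List.ofFn d).zip (List.ofFn d).tail).countP fun p => p.1 != p.2

/-- Checker paths from `(0,0)` to `(x,t)` whose first step is to `(1,1)`,
encoded by their sequences of moves. -/
def cpaths (x t : ℤ) : Finset (Fin t.toNat → Bool) :=
  Finset.univ.filter fun d => moveEndpoint d = x ∧ (List.ofFn d).headI = true

/-- The x-coordinate of the `k`-th point of the path encoded by moves `d`. -/
def cpos {n : ℕ} (d : Fin n → Bool) (k : Fin n) : ℤ :=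
  ∑ j ∈ Finset.univ.filter (fun j : Fin n => (j : ℕ) < (k : ℕ)), (if d j then (1 : ℤ) else -1)

/-- Product of the values of the field `u` over the edges of the path encoded by `d`.
Here `u x t` denotes the value of the field on the edge with midpoint `(x + 1/2, t + 1/2)`. -/
def fieldWeight (u : ℤ → ℤ → ℝ) {n : ℕ} (d : Fin n → Bool) : ℝ :=
  ∏ k : Fin n, (if d k then u (cpos d k) (k : ℕ) else u (cpos d k - 1) (k : ℕ))

/-- Feynman checkers amplitude `a(x,t,u)` in an external field `u`, where `u x t` is
the value of the field on the edge with midpoint `(x + 1/2, t + 1/2)`. -/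
noncomputable def af (u : ℤ → ℤ → ℝ) (x t : ℤ) : ℂ :=
  (Real.sqrt 2 : ℂ) ^ (1 - t) * Complex.I *
    ∑ d ∈ cpaths x t, (-Complex.I) ^ nturns d * (fieldWeight u d : ℂ)

/-- The homogeneous magnetic field: `u(x+1/2, t+1/2) = -1` if both `x` and `t` are even,
and `+1` otherwise. -/
noncomputable def uHom : ℤ → ℤ → ℝ := fun x t => if Even x ∧ Even t then -1 else 1

/-- `b₁(x,t) = a₁(2x-1, 2t-1, u)` for `x + t` even, and `0` for `x + t` odd. -/
noncomputable def b1 (x t : ℤ) : ℝ :=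
  if Even (x + t) then (af uHom (2 * x - 1) (2 * t - 1)).re else 0

/-- `b₂(x,t) = a₂(2x-1, 2t-1, u)` for `x + t` even, and `0` for `x + t` odd. -/
noncomputable def b2 (x t : ℤ) : ℝ :=
  if Even (x + t) then (af uHom (2 * x - 1) (2 * t - 1)).im else 0

section PathSums

variable (u : ℤ → ℤ → ℝ)

lemma moveEndpoint_snoc {n : ℕ} (d : Fin n → Bool) (b : Bool) :
    moveEndpoint (Fin.snoc d b : Fin (n + 1) → Bool) = moveEndpoint d + if b then 1 else -1 := by
  simp [moveEndpoint, Fin.sum_univ_castSucc]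

lemma countP_zip_tail_append_singleton {α : Type*} (p : α × α → Bool) (l : List α) (b : α) :
    ((l ++ [b]).zip (l ++ [b]).tail).countP p =
      (l.zip l.tail).countP p + if l = [] then 0 else if p (l.getLastD b, b) then 1 else 0 := by
  induction l with
  | nil => simp
  | cons a l ih =>
    cases l with
    | nil => simp
    | cons c l => simp_all [List.countP_cons]; omega

lemma nturns_snoc {n : ℕ} (d : Fin (n + 1) → Bool) (b : Bool) :
    nturns (Fin.snoc d b : Fin (n + 2) → Bool) =
      nturns d + if d (Fin.last n) = b then 0 else 1 := by
  have hsnoc : List.ofFn (Fin.snoc d b : Fin (n + 2) → Bool) = List.ofFn d ++ [b] := by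
    rw [List.ofFn_succ', List.concat_eq_append]
    simp only [Fin.snoc_castSucc, Fin.snoc_last]
  have hlast : (List.ofFn d).getLastD b = d (Fin.last n) := by
    rw [List.ofFn_succ', List.concat_eq_append, List.getLastD_concat]
  rw [nturns, hsnoc, countP_zip_tail_append_singleton, hlast, nturns]
  cases d (Fin.last n) <;> cases b <;> simp

lemma cpos_snoc_castSucc {n : ℕ} (d : Fin (n + 1) → Bool) (b : Bool) (k : Fin (n + 1)) :
    cpos (Fin.snoc d b : Fin (n + 2) → Bool) k.castSucc = cpos d k := by
  simp [cpos, Finset.sum_filter, Fin.sum_univ_castSucc, k.isLt.not_gt]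

lemma cpos_snoc_last {n : ℕ} (d : Fin (n + 1) → Bool) (b : Bool) :
    cpos (Fin.snoc d b : Fin (n + 2) → Bool) (Fin.last (n + 1)) = moveEndpoint d := by
  simp [cpos, moveEndpoint, Finset.sum_filter, Fin.sum_univ_castSucc]

lemma fieldWeight_snoc {n : ℕ} (d : Fin (n + 1) → Bool) (b : Bool) :
    fieldWeight u (Fin.snoc d b : Fin (n + 2) → Bool) =
      fieldWeight u d *
        if b then u (moveEndpoint d) (n + 1) else u (moveEndpoint d - 1) (n + 1) := by
  simp [fieldWeight, Fin.prod_univ_castSucc, cpos_snoc_castSucc, cpos_snoc_last]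

noncomputable def pathWeight {n : ℕ} (d : Fin n → Bool) : ℂ :=
  (-Complex.I) ^ nturns d * (fieldWeight u d : ℂ)

lemma pathWeight_snoc {n : ℕ} (d : Fin (n + 1) → Bool) (b : Bool) :
    pathWeight u (Fin.snoc d b : Fin (n + 2) → Bool) =
      pathWeight u d * (if d (Fin.last n) = b then 1 else -Complex.I) *
        (if b then u (moveEndpoint d) (n + 1) else u (moveEndpoint d - 1) (n + 1) : ℝ) := by
  rw [pathWeight, pathWeight, nturns_snoc, fieldWeight_snoc, pow_add]
  push_cast
  split_ifs <;> ring

/-- The part of the path sum in `af u x (n + 1)` coming from paths whose last move is `b`. -/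
noncomputable def lastMoveSum (x : ℤ) (n : ℕ) (b : Bool) : ℂ :=
  ∑ d : Fin (n + 1) → Bool with
    moveEndpoint d = x ∧ (List.ofFn d).headI = true ∧ d (Fin.last n) = b, pathWeight u d

lemma sum_paths_eq_lastMoveSum (x : ℤ) (n : ℕ) (g : Bool → ℂ) :
    ∑ d : Fin (n + 1) → Bool with moveEndpoint d = x ∧ (List.ofFn d).headI = true,
        pathWeight u d * g (d (Fin.last n)) = ∑ c, lastMoveSum u x n c * g c := by
  simp only [lastMoveSum, Fintype.sum_bool, Finset.sum_filter, Finset.sum_mul,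
    ← Finset.sum_add_distrib]
  refine Finset.sum_congr rfl fun d _ => ?_
  cases d (Fin.last n) <;> simp

lemma lastMoveSum_succ_eq_sum_snoc (x : ℤ) (n : ℕ) (b : Bool) :
    lastMoveSum u x (n + 1) b =
      ∑ d : Fin (n + 1) → Bool with
        moveEndpoint d = x - (if b then 1 else -1) ∧ (List.ofFn d).headI = true,
        pathWeight u (Fin.snoc d b : Fin (n + 2) → Bool) := by
  rw [lastMoveSum, Finset.sum_filter, Finset.sum_filter,
    ← (Fin.snocEquiv fun _ => Bool).sum_comp, Fintype.sum_prod_type, Fintype.sum_bool]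
  cases b <;> simp [Fin.snocEquiv, moveEndpoint_snoc, eq_sub_iff_add_eq, ← sub_eq_add_neg,
    sub_eq_iff_eq_add]

lemma lastMoveSum_succ (x : ℤ) (n : ℕ) (b : Bool) :
    lastMoveSum u x (n + 1) b = ∑ c, lastMoveSum u (x - if b then 1 else -1) n c *
      ((if c = b then 1 else -Complex.I) *
        (if b then u (x - 1) (n + 1) else u x (n + 1) : ℝ)) := by
  rw [lastMoveSum_succ_eq_sum_snoc, ← sum_paths_eq_lastMoveSum]
  refine Finset.sum_congr rfl fun d hd => ?_
  rw [pathWeight_snoc, (Finset.mem_filter.1 hd).2.1, mul_assoc]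
  cases b <;> simp

lemma lastMoveSum_succ_true (x : ℤ) (n : ℕ) :
    lastMoveSum u x (n + 1) true =
      u (x - 1) (n + 1) *
        (lastMoveSum u (x - 1) n true - Complex.I * lastMoveSum u (x - 1) n false) := by
  simp only [lastMoveSum_succ, Fintype.sum_bool, if_true]
  simp; ring

lemma lastMoveSum_succ_false (x : ℤ) (n : ℕ) :
    lastMoveSum u x (n + 1) false =
      u x (n + 1) * (lastMoveSum u (x + 1) n false - Complex.I * lastMoveSum u (x + 1) n true) := by
  simp only [lastMoveSum_succ, Fintype.sum_bool]
  simp; ring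

lemma lastMoveSum_zero (x : ℤ) (b : Bool) :
    lastMoveSum u x 0 b = if x = 1 ∧ b = true then (u 0 0 : ℂ) else 0 := by
  rw [lastMoveSum, Finset.sum_filter, ← (Equiv.funUnique (Fin 1) Bool).symm.sum_comp,
    Fintype.sum_bool]
  cases b <;> simp [moveEndpoint, pathWeight, nturns, fieldWeight, cpos, eq_comm]

lemma lastMoveSum_true_im_and_false_re (n : ℕ) (x : ℤ) :
    (lastMoveSum u x n true).im = 0 ∧ (lastMoveSum u x n false).re = 0 := by
  induction n generalizing x with
  | zero => simp [lastMoveSum_zero, apply_ite]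
  | succ n ih =>
    constructor
    · simp [lastMoveSum_succ_true, (ih _).1, (ih _).2]
    · simp [lastMoveSum_succ_false, (ih _).1, (ih _).2]

lemma af_eq_lastMoveSum (x : ℤ) (n : ℕ) :
    af u x (n + 1) = ((Real.sqrt 2)⁻¹ ^ n : ℝ) * Complex.I *
      (lastMoveSum u x n true + lastMoveSum u x n false) := by
  have hsum : ∑ d ∈ cpaths x (n + 1), (-Complex.I) ^ nturns d * (fieldWeight u d : ℂ) =
      ∑ c, lastMoveSum u x n c := by
    have h := sum_paths_eq_lastMoveSum u x n fun _ => 1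
    simp only [mul_one] at h
    exact h
  rw [af, hsum, Fintype.sum_bool, show (1 : ℤ) - (n + 1) = -n by ring, zpow_neg, zpow_natCast]
  push_cast
  rw [inv_pow]

lemma af_re_eq (x : ℤ) (n : ℕ) :
    (af u x (n + 1)).re = -(Real.sqrt 2)⁻¹ ^ n * (lastMoveSum u x n false).im := by
  simp only [af_eq_lastMoveSum, mul_assoc, Complex.re_ofReal_mul, Complex.I_mul_re,
    Complex.add_im, (lastMoveSum_true_im_and_false_re u n x).1, zero_add, neg_mul, mul_neg]

lemma af_im_eq (x : ℤ) (n : ℕ) :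
    (af u x (n + 1)).im = (Real.sqrt 2)⁻¹ ^ n * (lastMoveSum u x n true).re := by
  simp only [af_eq_lastMoveSum, mul_assoc, Complex.im_ofReal_mul, Complex.I_mul_im,
    Complex.add_re, (lastMoveSum_true_im_and_false_re u n x).2, add_zero]

theorem af_re_add_one (x : ℤ) {t : ℤ} (ht : 0 < t) :
    (af u x (t + 1)).re = u x t * ((af u (x + 1) t).re + (af u (x + 1) t).im) / Real.sqrt 2 := by
  obtain ⟨n, rfl⟩ : ∃ n : ℕ, t = n + 1 := ⟨(t - 1).toNat, by omega⟩
  have h := af_re_eq u x (n + 1)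
  push_cast at h
  rw [h, af_re_eq, af_im_eq, lastMoveSum_succ_false]
  simp only [Complex.im_ofReal_mul, Complex.sub_im, Complex.I_mul_im]
  rw [pow_succ]
  field_simp
  ring

theorem af_im_add_one (x : ℤ) {t : ℤ} (ht : 0 < t) :
    (af u x (t + 1)).im =
      u (x - 1) t * ((af u (x - 1) t).im - (af u (x - 1) t).re) / Real.sqrt 2 := by
  obtain ⟨n, rfl⟩ : ∃ n : ℕ, t = n + 1 := ⟨(t - 1).toNat, by omega⟩
  have h := af_im_eq u x (n + 1)
  push_cast at h
  rw [h, af_re_eq, af_im_eq, lastMoveSum_succ_true]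
  simp only [Complex.re_ofReal_mul, Complex.sub_re, Complex.I_mul_re]
  rw [pow_succ]
  field_simp

theorem af_one (x : ℤ) : af u x 1 = if x = 1 then u 0 0 * Complex.I else 0 := by
  simpa [lastMoveSum_zero, apply_ite, mul_comm] using af_eq_lastMoveSum u x 0

end PathSums

lemma uHom_of_odd_left {x : ℤ} (hx : Odd x) (t : ℤ) : uHom x t = 1 :=
  if_neg fun h => Int.not_even_iff_odd.2 hx h.1

lemma uHom_of_odd_right (x : ℤ) {t : ℤ} (ht : Odd t) : uHom x t = 1 :=
  if_neg fun h => Int.not_even_iff_odd.2 ht h.2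

lemma uHom_of_even_of_even {x t : ℤ} (hx : Even x) (ht : Even t) : uHom x t = -1 :=
  if_pos ⟨hx, ht⟩

section HomogeneousField

variable {X T : ℤ}

theorem af_uHom_re_add_two (hX : Odd X) (hT : Odd T) (hT₀ : 0 < T) :
    (af uHom X (T + 2)).re = ((af uHom (X + 2) T).re + (af uHom (X + 2) T).im +
      (af uHom X T).im - (af uHom X T).re) / 2 := by
  rw [show T + 2 = T + 1 + 1 by ring, af_re_add_one _ _ (by omega), af_re_add_one _ _ hT₀,
    af_im_add_one _ _ hT₀, uHom_of_odd_left hX, uHom_of_odd_right _ hT, add_sub_cancel_right,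
    uHom_of_odd_right _ hT, add_assoc, one_add_one_eq_two]
  field_simp
  rw [Real.sq_sqrt zero_le_two]
  ring

theorem af_uHom_im_add_two (hX : Odd X) (hT : Odd T) (hT₀ : 0 < T) :
    (af uHom X (T + 2)).im = ((af uHom (X - 2) T).re - (af uHom (X - 2) T).im +
      (af uHom X T).re + (af uHom X T).im) / 2 := by
  rw [show T + 2 = T + 1 + 1 by ring, af_im_add_one _ _ (by omega), af_im_add_one _ _ hT₀,
    af_re_add_one _ _ hT₀, uHom_of_even_of_even (hX.sub_odd odd_one) hT.add_one, sub_add_cancel,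
    show X - 1 - 1 = X - 2 by ring, uHom_of_odd_right _ hT, uHom_of_odd_right _ hT]
  field_simp
  rw [Real.sq_sqrt zero_le_two]
  ring

theorem af_uHom_im_eq_re_and_re_sub_two (hT : Odd T) (hT₀ : 0 < T) (hXT : 4 ∣ X + T) :
    (af uHom X T).im = (af uHom X T).re ∧ (af uHom (X - 2) T).re = (af uHom X T).re := by
  obtain ⟨k, rfl⟩ := hT
  lift k to ℕ using (by omega)
  clear hT₀
  induction k generalizing X with
  | zero =>
    simp only [Nat.cast_zero, mul_zero, zero_add] at hXT ⊢
    simp [af_one, apply_ite, show X ≠ 1 by omega]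
  | succ k ih =>
    have hT : Odd (2 * (k : ℤ) + 1) := ⟨k, rfl⟩
    have hT₀ : 0 < 2 * (k : ℤ) + 1 := by omega
    push_cast at hXT ⊢
    rw [show 2 * ((k : ℤ) + 1) + 1 = 2 * k + 1 + 2 by ring] at hXT ⊢
    have hX : Odd X := by rw [Int.odd_iff]; omega
    obtain ⟨hright₁, hright₂⟩ := ih (X := X + 2) (by omega)
    obtain ⟨hleft₁, -⟩ := ih (X := X - 2) (by omega)
    rw [add_sub_cancel_right] at hright₂
    rw [af_uHom_re_add_two hX hT hT₀, af_uHom_im_add_two hX hT hT₀,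
      af_uHom_re_add_two (hX.sub_even even_two) hT hT₀, sub_add_cancel]
    constructor <;> linarith

end HomogeneousField

/-- Recurrence relations on the new lattice. -/
theorem new_lattice_recurrence (x t : ℤ) (hxt : Even (x + t)) (ht : 1 < t) :
    b1 x t = (1 / 2) * (b1 (x + 1) (t - 1) + b2 (x + 1) (t - 1)) ∧
    b2 x t = (1 / 2) * (3 * b1 (x - 1) (t - 1) - b2 (x - 1) (t - 1)) := by
  have hX : Odd (2 * x - 1) := by rw [Int.odd_iff]; omega
  have hT : Odd (2 * t - 3) := by rw [Int.odd_iff]; omega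
  have hT₀ : 0 < 2 * t - 3 := by omega
  obtain ⟨hinv₁, hinv₂⟩ := af_uHom_im_eq_re_and_re_sub_two hT hT₀ (X := 2 * x - 1)
    (by obtain ⟨r, hr⟩ := hxt; omega)
  have hre := af_uHom_re_add_two hX hT hT₀
  have him := af_uHom_im_add_two hX hT hT₀
  have hxt₁ : Even (x + 1 + (t - 1)) := by rwa [add_add_sub_cancel]
  have hxt₂ : Even (x - 1 + (t - 1)) := by
    rw [show x - 1 + (t - 1) = x + t - 2 by ring]; exact hxt.sub even_two
  simp only [b1, b2, if_pos hxt, if_pos hxt₁, if_pos hxt₂]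
  rw [show 2 * t - 1 = 2 * t - 3 + 2 by ring, show 2 * (x + 1) - 1 = 2 * x - 1 + 2 by ring,
    show 2 * (t - 1) - 1 = 2 * t - 3 by ring, show 2 * (x - 1) - 1 = 2 * x - 1 - 2 by ring]
  constructor <;> linarith
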